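/- arXiv:1008.4517 — 3 statements merged into one kernel-verified Lean document; each statement's English description precedes it below -/
import Mathlib

section
/- Let H be a commutative Hopf algebra and F a two-cocycle on H. Then the map R(h,g) := F(g_(1), h_(1)) F^{-1}(h_(2), g_(2)) makes the cocycle-twisted Hopf algebra H_F cotriangular; in particular R(h_(1), g_(1)) R(g_(2), h_(2)) = epsilon(g) epsilon(h) for all g, h in H_F. -/
open TensorProduct LinearMap

noncomputable section

variable (H : Type) [CommRing H] [HopfAlgebra ℂ H]

/-- Iterated comultiplication on `H ⊗ H`. -/
def comul2 : (H ⊗[ℂ] H) →ₗ[ℂ] (H ⊗[ℂ] H) ⊗[ℂ] (H ⊗[ℂ] H) :=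
  (TensorProduct.tensorTensorTensorComm ℂ H H H H).toLinearMap ∘ₗ
    TensorProduct.map Coalgebra.comul Coalgebra.comul

/-- The counit of the coalgebra `H ⊗ H`. -/
def counit2 : (H ⊗[ℂ] H) →ₗ[ℂ] ℂ :=
  (LinearMap.mul' ℂ ℂ) ∘ₗ TensorProduct.map Coalgebra.counit Coalgebra.counit

/-- Convolution product on functionals on `H ⊗ H`. -/
def conv2 (f g : (H ⊗[ℂ] H) →ₗ[ℂ] ℂ) : (H ⊗[ℂ] H) →ₗ[ℂ] ℂ :=
  (LinearMap.mul' ℂ ℂ) ∘ₗ TensorProduct.map f g ∘ₗ comul2 H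

/-- Comultiplication on `H ⊗ (H ⊗ H)`. -/
def comul3 : (H ⊗[ℂ] (H ⊗[ℂ] H)) →ₗ[ℂ] (H ⊗[ℂ] (H ⊗[ℂ] H)) ⊗[ℂ] (H ⊗[ℂ] (H ⊗[ℂ] H)) :=
  (TensorProduct.tensorTensorTensorComm ℂ H H (H ⊗[ℂ] H) (H ⊗[ℂ] H)).toLinearMap ∘ₗ
    TensorProduct.map Coalgebra.comul (comul2 H)

/-- The counit of `H ⊗ (H ⊗ H)`. -/
def counit3 : (H ⊗[ℂ] (H ⊗[ℂ] H)) →ₗ[ℂ] ℂ :=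
  (LinearMap.mul' ℂ ℂ) ∘ₗ TensorProduct.map Coalgebra.counit (counit2 H)

/-- Convolution product on functionals on `H ⊗ (H ⊗ H)`. -/
def conv3 (f g : (H ⊗[ℂ] (H ⊗[ℂ] H)) →ₗ[ℂ] ℂ) : (H ⊗[ℂ] (H ⊗[ℂ] H)) →ₗ[ℂ] ℂ :=
  (LinearMap.mul' ℂ ℂ) ∘ₗ TensorProduct.map f g ∘ₗ comul3 H

variable {H}

/-- `(h ⊗ (g ⊗ f)) ↦ ε(h) F(g, f)`. -/
def cocyT1 (F : (H ⊗[ℂ] H) →ₗ[ℂ] ℂ) : (H ⊗[ℂ] (H ⊗[ℂ] H)) →ₗ[ℂ] ℂ :=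
  F ∘ₗ (TensorProduct.lid ℂ (H ⊗[ℂ] H)).toLinearMap ∘ₗ
    TensorProduct.map Coalgebra.counit LinearMap.id

/-- `(h ⊗ (g ⊗ f)) ↦ F(h, g f)`. -/
def cocyT2 (F : (H ⊗[ℂ] H) →ₗ[ℂ] ℂ) : (H ⊗[ℂ] (H ⊗[ℂ] H)) →ₗ[ℂ] ℂ :=
  F ∘ₗ TensorProduct.map LinearMap.id (LinearMap.mul' ℂ H)

/-- `(h ⊗ (g ⊗ f)) ↦ F⁻¹(h g, f)`. -/
def cocyT3 (Finv : (H ⊗[ℂ] H) →ₗ[ℂ] ℂ) : (H ⊗[ℂ] (H ⊗[ℂ] H)) →ₗ[ℂ] ℂ :=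
  Finv ∘ₗ TensorProduct.map (LinearMap.mul' ℂ H) LinearMap.id ∘ₗ
    (TensorProduct.assoc ℂ H H H).symm.toLinearMap

/-- `(h ⊗ (g ⊗ f)) ↦ F⁻¹(h, g) ε(f)`. -/
def cocyT4 (Finv : (H ⊗[ℂ] H) →ₗ[ℂ] ℂ) : (H ⊗[ℂ] (H ⊗[ℂ] H)) →ₗ[ℂ] ℂ :=
  Finv ∘ₗ (TensorProduct.rid ℂ (H ⊗[ℂ] H)).toLinearMap ∘ₗ
    TensorProduct.map LinearMap.id Coalgebra.counit ∘ₗ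
    (TensorProduct.assoc ℂ H H H).symm.toLinearMap

/-- The two-cocycle condition `∂F = 1`. -/
def IsTwoCocycle (F Finv : (H ⊗[ℂ] H) →ₗ[ℂ] ℂ) : Prop :=
  conv3 H (conv3 H (conv3 H (cocyT1 F) (cocyT2 F)) (cocyT3 Finv)) (cocyT4 Finv) = counit3 H

/-- The cocycle-twisted product `h •_F g = F(h₍₁₎, g₍₁₎) h₍₂₎ g₍₂₎ F⁻¹(h₍₃₎, g₍₃₎)` of `H_F`. -/
def twistedMul (F Finv : (H ⊗[ℂ] H) →ₗ[ℂ] ℂ) : (H ⊗[ℂ] H) →ₗ[ℂ] H :=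
  (TensorProduct.rid ℂ H).toLinearMap ∘ₗ
    (TensorProduct.lid ℂ (H ⊗[ℂ] ℂ)).toLinearMap ∘ₗ
    TensorProduct.map F (TensorProduct.map (LinearMap.mul' ℂ H) Finv) ∘ₗ
    TensorProduct.map LinearMap.id (comul2 H) ∘ₗ comul2 H

/-- The universal R-matrix `R(h, g) := F(g₍₁₎, h₍₁₎) F⁻¹(h₍₂₎, g₍₂₎)`. -/
def Rmat (F Finv : (H ⊗[ℂ] H) →ₗ[ℂ] ℂ) : (H ⊗[ℂ] H) →ₗ[ℂ] ℂ :=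
  conv2 H (F ∘ₗ (TensorProduct.comm ℂ H H).toLinearMap) Finv


/-! In the convolution rings of functionals on `H ⊗ H` and `H ⊗ H ⊗ H`, `F` is a unit and
precomposition with a coalgebra map is a ring morphism; write `F₁₂ = F ∘ proj₁₂`,
`F_{1,23} = F ∘ mul₂₃`, and so on. The twisted product is the convolution `F * m * F⁻¹` and
`R = F₂₁ F⁻¹`, so coquasitriangularity and `R * R₂₁ = 1` are computations with units.
For the bicharacter identities, pulling the scalar factors of `•_F` out of one slot gives
`R(f, g •_F h) = F₂₃ R_{1,23} F₂₃⁻¹`, and similarly in the first slot. Permuting the tensor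
factors in the cocycle identity `F₂₃ F_{1,23} = F₁₂ F_{12,3}` gives further relations among the
legs (commutativity of `H` makes, e.g., `F_{2,31} = F_{2,13}`), and three of them turn
`F₂₃ R_{1,23} F₂₃⁻¹` into `R₁₃ R₁₂`. -/

open WithConv
open scoped Coalgebra

namespace CoalgHom

variable {R A B C : Type*} [CommSemiring R] [Semiring A] [Algebra R A]
  [AddCommMonoid B] [Module R B] [Coalgebra R B] [AddCommMonoid C] [Module R C] [Coalgebra R C]

def precompConv (φ : B →ₗc[R] C) : WithConv (C →ₗ[R] A) →+* WithConv (B →ₗ[R] A) where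
  toFun f := toConv (f.ofConv ∘ₗ φ)
  map_one' := by
    change toConv ((Algebra.linearMap R A ∘ₗ Coalgebra.counit) ∘ₗ (φ : B →ₗ[R] C)) = _
    rw [LinearMap.comp_assoc, CoalgHomClass.counit_comp]
    rfl
  map_mul' f g := congrArg toConv (convMul_comp_coalgHom_distrib f g φ)
  map_zero' := rfl
  map_add' _ _ := rfl

@[simp] lemma ofConv_precompConv (φ : B →ₗc[R] C) (f : WithConv (C →ₗ[R] A)) :
    (precompConv φ f).ofConv = f.ofConv ∘ₗ φ := rfl

def precompConvUnits (φ : B →ₗc[R] C) : (WithConv (C →ₗ[R] A))ˣ →* (WithConv (B →ₗ[R] A))ˣ :=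
  Units.map (precompConv φ).toMonoidHom

lemma precompConv_val (φ : B →ₗc[R] C) (f : (WithConv (C →ₗ[R] A))ˣ) :
    precompConv φ ↑f = (precompConvUnits φ f : WithConv (B →ₗ[R] A)) := rfl

lemma precompConvUnits_precompConvUnits {D : Type*} [AddCommMonoid D] [Module R D]
    [Coalgebra R D] (φ : B →ₗc[R] C) (ψ : D →ₗc[R] B) (f : (WithConv (C →ₗ[R] A))ˣ) :
    precompConvUnits ψ (precompConvUnits φ f) = precompConvUnits (φ.comp ψ) f := rfl

@[simp] lemma precompConvUnits_id (f : (WithConv (C →ₗ[R] A))ˣ) :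
    precompConvUnits (CoalgHom.id R C) f = f := rfl

end CoalgHom

namespace AlgHom

variable {R A A' C : Type*} [CommSemiring R] [Semiring A] [Algebra R A] [Semiring A']
  [Algebra R A'] [AddCommMonoid C] [Module R C] [Coalgebra R C]

def postcompConv (h : A →ₐ[R] A') : WithConv (C →ₗ[R] A) →+* WithConv (C →ₗ[R] A') where
  toFun f := toConv (h.toLinearMap ∘ₗ f.ofConv)
  map_one' := by
    change toConv (h.toLinearMap ∘ₗ Algebra.linearMap R A ∘ₗ Coalgebra.counit) =
      toConv (Algebra.linearMap R A' ∘ₗ Coalgebra.counit)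
    congr 1
    ext
    simp
  map_mul' f g := congrArg toConv (algHom_comp_convMul_distrib h f g)
  map_zero' := by ext; simp
  map_add' _ _ := by ext; simp

@[simp] lemma ofConv_postcompConv (h : A →ₐ[R] A') (f : WithConv (C →ₗ[R] A)) :
    (postcompConv h f).ofConv = h.toLinearMap ∘ₗ f.ofConv := rfl

lemma _root_.CoalgHom.precompConv_postcompConv {B : Type*} [AddCommMonoid B] [Module R B]
    [Coalgebra R B] (φ : B →ₗc[R] C) (h : A →ₐ[R] A') (g : WithConv (C →ₗ[R] A)) :
    φ.precompConv (postcompConv h g) = postcompConv h (φ.precompConv g) := rfl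

end AlgHom

open CoalgHom (precompConv precompConvUnits precompConv_val precompConvUnits_precompConvUnits
  precompConvUnits_id precompConv_postcompConv)
open AlgHom (postcompConv)

section ScalarFactor

variable {R A C D : Type*} [CommSemiring R] [Semiring A] [Algebra R A]
  [AddCommMonoid C] [Module R C] [Coalgebra R C] [AddCommMonoid D] [Module R D] [Coalgebra R D]

variable (R C D) in
def sndCoalgHom : C ⊗[R] D →ₗc[R] D :=
  (Coalgebra.TensorProduct.lid R D).toCoalgHom.comp
    (Coalgebra.TensorProduct.map (Coalgebra.counitCoalgHom R C) (CoalgHom.id R D))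

variable (R C D) in
def fstCoalgHom : C ⊗[R] D →ₗc[R] C :=
  (Coalgebra.TensorProduct.rid R R C).toCoalgHom.comp
    (Coalgebra.TensorProduct.map (CoalgHom.id R C) (Coalgebra.counitCoalgHom R D))

@[simp] lemma sndCoalgHom_tmul (c : C) (d : D) :
    sndCoalgHom R C D (c ⊗ₜ d) = Coalgebra.counit (R := R) c • d := rfl

lemma Coalgebra.Repr.sum_counit_mul_apply_tmul {c : C} {ι : Type*} (𝓡 : Coalgebra.Repr R c ι)
    (X : C ⊗[R] A →ₗ[R] R) (a : A) :
    ∑ i ∈ 𝓡.index, Coalgebra.counit (R := R) (𝓡.left i) * X (𝓡.right i ⊗ₜ a) = X (c ⊗ₜ a) := by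
  conv_rhs => rw [← Coalgebra.sum_counit_smul 𝓡]
  simp [sum_tmul, ← smul_tmul']

lemma Coalgebra.Repr.sum_apply_tmul_mul_counit {c : C} {ι : Type*} (𝓡 : Coalgebra.Repr R c ι)
    (X : C ⊗[R] A →ₗ[R] R) (a : A) :
    ∑ i ∈ 𝓡.index, X (𝓡.left i ⊗ₜ a) * Coalgebra.counit (R := R) (𝓡.right i) = X (c ⊗ₜ a) := by
  have h : ∑ i ∈ 𝓡.index, Coalgebra.counit (R := R) (𝓡.right i) • 𝓡.left i = c := by
    simpa only [map_sum, rid_tmul, one_smul] using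
      congr(_root_.TensorProduct.rid R C $(Coalgebra.sum_tmul_counit_eq 𝓡))
  conv_rhs => rw [← h]
  simp [sum_tmul, ← smul_tmul', mul_comm]

lemma toConv_comp_lTensor_postcompConv_mul (X : C ⊗[R] A →ₗ[R] R) (φ : WithConv (D →ₗ[R] R))
    (U : WithConv (D →ₗ[R] A)) :
    toConv (X ∘ₗ lTensor C (postcompConv (Algebra.ofId R A) φ * U).ofConv) =
      precompConv (sndCoalgHom R C D) φ * toConv (X ∘ₗ lTensor C U.ofConv) := by
  ext c d
  simp [(ℛ R d).convMul_apply, TensorProduct.comul_tmul, ← (ℛ R d).eq, ← (ℛ R c).eq, sum_tmul,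
    tmul_sum, Algebra.algebraMap_eq_smul_one]
  refine Finset.sum_congr rfl fun j _ => ?_
  rw [← (ℛ R c).sum_counit_mul_apply_tmul, Finset.mul_sum]
  exact Finset.sum_congr rfl fun i _ => by ring

lemma toConv_comp_lTensor_mul_postcompConv (X : C ⊗[R] A →ₗ[R] R) (U : WithConv (D →ₗ[R] A))
    (ψ : WithConv (D →ₗ[R] R)) :
    toConv (X ∘ₗ lTensor C (U * postcompConv (Algebra.ofId R A) ψ).ofConv) =
      toConv (X ∘ₗ lTensor C U.ofConv) * precompConv (sndCoalgHom R C D) ψ := by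
  ext c d
  simp [(ℛ R d).convMul_apply, TensorProduct.comul_tmul, ← (ℛ R d).eq, ← (ℛ R c).eq, sum_tmul,
    tmul_sum, Algebra.algebraMap_eq_smul_one]
  refine Finset.sum_congr rfl fun j _ => ?_
  rw [← (ℛ R c).sum_apply_tmul_mul_counit, Finset.mul_sum]
  exact Finset.sum_congr rfl fun i _ => by ring

lemma postcompConv_ofId_mul (φ : WithConv (D →ₗ[R] R)) (U : WithConv (D →ₗ[R] A)) :
    postcompConv (Algebra.ofId R A) φ * U = toConv ((TensorProduct.lid R A).toLinearMap ∘ₗ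
      TensorProduct.map φ.ofConv U.ofConv ∘ₗ Coalgebra.comul) := by
  ext d
  simp [(ℛ R d).convMul_apply, ← (ℛ R d).eq, Algebra.smul_def]

lemma mul_postcompConv_ofId (U : WithConv (D →ₗ[R] A)) (ψ : WithConv (D →ₗ[R] R)) :
    U * postcompConv (Algebra.ofId R A) ψ = toConv ((TensorProduct.rid R A).toLinearMap ∘ₗ
      TensorProduct.map U.ofConv ψ.ofConv ∘ₗ Coalgebra.comul) := by
  ext d
  simp [(ℛ R d).convMul_apply, ← (ℛ R d).eq, Algebra.smul_def, Algebra.commutes]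

lemma mul'_comp_map_counit (X : D →ₗ[R] R) :
    mul' R R ∘ₗ TensorProduct.map Coalgebra.counit X =
      X ∘ₗ (sndCoalgHom R C D : C ⊗[R] D →ₗ[R] D) := by
  ext; simp

end ScalarFactor

namespace Legs

variable (R H : Type*) [CommSemiring R] [CommSemiring H] [Bialgebra R H]

def flip : H ⊗[R] H →ₗc[R] H ⊗[R] H :=
  (Bialgebra.TensorProduct.comm R H H).toCoalgEquiv.toCoalgHom

def proj₁₂ : H ⊗[R] (H ⊗[R] H) →ₗc[R] H ⊗[R] H :=
  Coalgebra.TensorProduct.map (CoalgHom.id R H) (fstCoalgHom R H H)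

def proj₁₃ : H ⊗[R] (H ⊗[R] H) →ₗc[R] H ⊗[R] H :=
  Coalgebra.TensorProduct.map (CoalgHom.id R H) (sndCoalgHom R H H)

def proj₂₃ : H ⊗[R] (H ⊗[R] H) →ₗc[R] H ⊗[R] H := sndCoalgHom R H (H ⊗[R] H)

def mul₁₂ : H ⊗[R] (H ⊗[R] H) →ₗc[R] H ⊗[R] H :=
  (Coalgebra.TensorProduct.map (Bialgebra.mulCoalgHom R H) (CoalgHom.id R H)).comp
    (Coalgebra.TensorProduct.assoc R R H H H).symm.toCoalgHom

def mul₂₃ : H ⊗[R] (H ⊗[R] H) →ₗc[R] H ⊗[R] H :=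
  Coalgebra.TensorProduct.map (CoalgHom.id R H) (Bialgebra.mulCoalgHom R H)

def swap₁₂ : H ⊗[R] (H ⊗[R] H) →ₗc[R] H ⊗[R] (H ⊗[R] H) :=
  (Coalgebra.TensorProduct.assoc R R H H H).toCoalgHom.comp
    ((Coalgebra.TensorProduct.map (flip R H) (CoalgHom.id R H)).comp
      (Coalgebra.TensorProduct.assoc R R H H H).symm.toCoalgHom)

def swap₂₃ : H ⊗[R] (H ⊗[R] H) →ₗc[R] H ⊗[R] (H ⊗[R] H) :=
  Coalgebra.TensorProduct.map (CoalgHom.id R H) (flip R H)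

def rotLeft : H ⊗[R] (H ⊗[R] H) →ₗc[R] H ⊗[R] (H ⊗[R] H) :=
  (Coalgebra.TensorProduct.assoc R R H H H).toCoalgHom.comp
    (Bialgebra.TensorProduct.comm R H (H ⊗[R] H)).toCoalgEquiv.toCoalgHom

def rotRight : H ⊗[R] (H ⊗[R] H) →ₗc[R] H ⊗[R] (H ⊗[R] H) :=
  (Bialgebra.TensorProduct.comm R (H ⊗[R] H) H).toCoalgEquiv.toCoalgHom.comp
    (Coalgebra.TensorProduct.assoc R R H H H).symm.toCoalgHom

variable {R H}

@[simp] lemma flip_tmul (x y : H) : flip R H (x ⊗ₜ y) = y ⊗ₜ x := rfl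
@[simp] lemma proj₁₂_tmul (x y z : H) :
    proj₁₂ R H (x ⊗ₜ (y ⊗ₜ z)) = x ⊗ₜ (Coalgebra.counit (R := R) z • y) := rfl
@[simp] lemma proj₁₃_tmul (x y z : H) :
    proj₁₃ R H (x ⊗ₜ (y ⊗ₜ z)) = x ⊗ₜ (Coalgebra.counit (R := R) y • z) := rfl
@[simp] lemma proj₂₃_tmul (x y z : H) :
    proj₂₃ R H (x ⊗ₜ (y ⊗ₜ z)) = Coalgebra.counit (R := R) x • (y ⊗ₜ z) := rfl
@[simp] lemma mul₁₂_tmul (x y z : H) : mul₁₂ R H (x ⊗ₜ (y ⊗ₜ z)) = (x * y) ⊗ₜ z := rfl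
@[simp] lemma mul₂₃_tmul (x y z : H) : mul₂₃ R H (x ⊗ₜ (y ⊗ₜ z)) = x ⊗ₜ (y * z) := rfl
@[simp] lemma swap₁₂_tmul (x y z : H) : swap₁₂ R H (x ⊗ₜ (y ⊗ₜ z)) = y ⊗ₜ (x ⊗ₜ z) := rfl
@[simp] lemma swap₂₃_tmul (x y z : H) : swap₂₃ R H (x ⊗ₜ (y ⊗ₜ z)) = x ⊗ₜ (z ⊗ₜ y) := rfl
@[simp] lemma rotLeft_tmul (x y z : H) : rotLeft R H (x ⊗ₜ (y ⊗ₜ z)) = y ⊗ₜ (z ⊗ₜ x) := rfl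
@[simp] lemma rotRight_tmul (x y z : H) : rotRight R H (x ⊗ₜ (y ⊗ₜ z)) = z ⊗ₜ (x ⊗ₜ y) := rfl

lemma flip_comp_flip : (flip R H).comp (flip R H) = CoalgHom.id R (H ⊗[R] H) :=
  CoalgHom.coe_linearMap_injective <| by ext; simp

lemma flip_comp_flip_comp {M : Type*} [AddCommMonoid M] [Module R M] [Coalgebra R M]
    (φ : M →ₗc[R] H ⊗[R] H) : (flip R H).comp ((flip R H).comp φ) = φ := by
  rw [← CoalgHom.comp_assoc, flip_comp_flip, CoalgHom.id_comp]

lemma proj₂₃_comp_rotLeft : (proj₂₃ R H).comp (rotLeft R H) = (flip R H).comp (proj₁₃ R H) :=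
  CoalgHom.coe_linearMap_injective <| by ext; simp

lemma mul₂₃_comp_rotLeft : (mul₂₃ R H).comp (rotLeft R H) = (mul₂₃ R H).comp (swap₁₂ R H) :=
  CoalgHom.coe_linearMap_injective <| by ext; simp [mul_comm]

lemma proj₁₂_comp_rotLeft : (proj₁₂ R H).comp (rotLeft R H) = proj₂₃ R H :=
  CoalgHom.coe_linearMap_injective <| by ext; simp [tmul_smul]

lemma mul₁₂_comp_rotLeft : (mul₁₂ R H).comp (rotLeft R H) = (flip R H).comp (mul₂₃ R H) :=
  CoalgHom.coe_linearMap_injective <| by ext; simp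

lemma proj₂₃_comp_swap₁₂ : (proj₂₃ R H).comp (swap₁₂ R H) = proj₁₃ R H :=
  CoalgHom.coe_linearMap_injective <| by ext; simp [tmul_smul]

lemma proj₁₂_comp_swap₁₂ : (proj₁₂ R H).comp (swap₁₂ R H) = (flip R H).comp (proj₁₂ R H) :=
  CoalgHom.coe_linearMap_injective <| by ext; simp [tmul_smul, smul_tmul']

lemma mul₁₂_comp_swap₁₂ : (mul₁₂ R H).comp (swap₁₂ R H) = mul₁₂ R H :=
  CoalgHom.coe_linearMap_injective <| by ext; simp [mul_comm]

lemma proj₂₃_comp_rotRight : (proj₂₃ R H).comp (rotRight R H) = proj₁₂ R H :=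
  CoalgHom.coe_linearMap_injective <| by ext; simp [tmul_smul]

lemma mul₂₃_comp_rotRight : (mul₂₃ R H).comp (rotRight R H) = (flip R H).comp (mul₁₂ R H) :=
  CoalgHom.coe_linearMap_injective <| by ext; simp

lemma proj₁₂_comp_rotRight : (proj₁₂ R H).comp (rotRight R H) = (flip R H).comp (proj₁₃ R H) :=
  CoalgHom.coe_linearMap_injective <| by ext; simp [tmul_smul, smul_tmul']

lemma mul₁₂_comp_rotRight : (mul₁₂ R H).comp (rotRight R H) = (mul₁₂ R H).comp (swap₂₃ R H) :=
  CoalgHom.coe_linearMap_injective <| by ext; simp [mul_comm]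

lemma proj₂₃_comp_swap₂₃ : (proj₂₃ R H).comp (swap₂₃ R H) = (flip R H).comp (proj₂₃ R H) :=
  CoalgHom.coe_linearMap_injective <| by ext; simp

lemma mul₂₃_comp_swap₂₃ : (mul₂₃ R H).comp (swap₂₃ R H) = mul₂₃ R H :=
  CoalgHom.coe_linearMap_injective <| by ext; simp [mul_comm]

lemma proj₁₂_comp_swap₂₃ : (proj₁₂ R H).comp (swap₂₃ R H) = proj₁₃ R H :=
  CoalgHom.coe_linearMap_injective <| by ext; simp

lemma rTensor_comp_assoc_symm (u : H ⊗[R] H →ₗ[R] H) :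
    rTensor H u ∘ₗ (TensorProduct.assoc R H H H).symm.toLinearMap =
      (flip R H : H ⊗[R] H →ₗ[R] H ⊗[R] H) ∘ₗ lTensor H u ∘ₗ (rotRight R H : _ →ₗ[R] _) := by
  ext; simp

lemma mul'_comp_flip : mul' R H ∘ₗ (flip R H : H ⊗[R] H →ₗ[R] H ⊗[R] H) = mul' R H := by
  ext; simp [mul_comm]

end Legs

-- In use, the three relations are permuted instances of the cocycle identity.
lemma conj_eq_of_cocycle_relations {G : Type*} [Group G] {x y z u v w t q s : G}
    (h₁ : u * w = x * y) (h₂ : v * w = t * s) (h₃ : x * z = q * s) :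
    x * (y * z⁻¹) * x⁻¹ = u * v⁻¹ * (t * q⁻¹) := by
  rw [eq_inv_mul_of_mul_eq h₁.symm, eq_inv_mul_of_mul_eq h₂, eq_inv_mul_of_mul_eq h₃]
  group

namespace CocycleTwist

open Legs

variable {R H : Type*} [CommSemiring R] [CommSemiring H] [Bialgebra R H]
  (f : (WithConv (H ⊗[R] H →ₗ[R] R))ˣ)

-- The cocycle condition `∂F = ε` in the form `F₂₃ F_{1,23} = F₁₂ F_{12,3}`.
def IsCocycle : Prop :=
  precompConvUnits (proj₂₃ R H) f * precompConvUnits (mul₂₃ R H) f =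
    precompConvUnits (proj₁₂ R H) f * precompConvUnits (mul₁₂ R H) f

def rMatrix : (WithConv (H ⊗[R] H →ₗ[R] R))ˣ := precompConvUnits (flip R H) f * f⁻¹

def twistedMulConv : WithConv (H ⊗[R] H →ₗ[R] H) :=
  postcompConv (Algebra.ofId R H) ↑f * toConv (mul' R H) * postcompConv (Algebra.ofId R H) ↑f⁻¹

variable {f}

lemma IsCocycle.precomp (hf : IsCocycle f) (σ : H ⊗[R] (H ⊗[R] H) →ₗc[R] H ⊗[R] (H ⊗[R] H)) :
    precompConvUnits ((proj₂₃ R H).comp σ) f * precompConvUnits ((mul₂₃ R H).comp σ) f =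
      precompConvUnits ((proj₁₂ R H).comp σ) f * precompConvUnits ((mul₁₂ R H).comp σ) f := by
  simpa only [map_mul, precompConvUnits_precompConvUnits] using congr(precompConvUnits σ $hf)

lemma rMatrix_mul_precompConvUnits_flip :
    rMatrix f * precompConvUnits (flip R H) (rMatrix f) = 1 := by
  simp only [rMatrix, map_mul, map_inv, precompConvUnits_precompConvUnits, flip_comp_flip,
    precompConvUnits_id]
  group

lemma precompConvUnits_flip_mul_rMatrix :
    precompConvUnits (flip R H) (rMatrix f) * rMatrix f = 1 := by
  simp only [rMatrix, map_mul, map_inv, precompConvUnits_precompConvUnits, flip_comp_flip,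
    precompConvUnits_id]
  group

lemma precompConv_flip_twistedMulConv_mul_rMatrix :
    precompConv (flip R H) (twistedMulConv f) * postcompConv (Algebra.ofId R H) ↑(rMatrix f) =
      postcompConv (Algebra.ofId R H) ↑(rMatrix f) * twistedMulConv f := by
  have cancel (g : (WithConv (H ⊗[R] H →ₗ[R] R))ˣ) (X : WithConv (H ⊗[R] H →ₗ[R] H)) :
      postcompConv (Algebra.ofId R H) ↑g⁻¹ * (postcompConv (Algebra.ofId R H) ↑g * X) = X := by
    rw [← mul_assoc, ← map_mul, Units.inv_mul, map_one, one_mul]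
  have hμ : precompConv (flip R H) (toConv (mul' R H)) = toConv (mul' R H) :=
    congrArg toConv mul'_comp_flip
  simp only [twistedMulConv, rMatrix, map_mul, map_inv, hμ, precompConv_postcompConv,
    precompConv_val, Units.val_mul, mul_assoc, cancel]

lemma toConv_comp_lTensor_twistedMulConv (X : H ⊗[R] H →ₗ[R] R) :
    toConv (X ∘ₗ lTensor H (twistedMulConv f).ofConv) =
      ↑(precompConvUnits (proj₂₃ R H) f) * precompConv (mul₂₃ R H) (toConv X) *
        ↑(precompConvUnits (proj₂₃ R H) f)⁻¹ := by
  rw [twistedMulConv, toConv_comp_lTensor_mul_postcompConv,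
    toConv_comp_lTensor_postcompConv_mul]
  rfl

lemma IsCocycle.rMatrix_comp_lTensor_twistedMulConv (hf : IsCocycle f) :
    toConv ((rMatrix f : WithConv (H ⊗[R] H →ₗ[R] R)).ofConv ∘ₗ
        lTensor H (twistedMulConv f).ofConv) =
      ↑(precompConvUnits (proj₁₃ R H) (rMatrix f) * precompConvUnits (proj₁₂ R H) (rMatrix f)) := by
  have h231 := hf.precomp (rotLeft R H)
  rw [proj₂₃_comp_rotLeft, mul₂₃_comp_rotLeft, proj₁₂_comp_rotLeft, mul₁₂_comp_rotLeft] at h231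
  have h213 := hf.precomp (swap₁₂ R H)
  rw [proj₂₃_comp_swap₁₂, proj₁₂_comp_swap₁₂, mul₁₂_comp_swap₁₂] at h213
  rw [toConv_comp_lTensor_twistedMulConv, toConv_ofConv, precompConv_val, ← Units.val_mul,
    ← Units.val_mul]
  congr 1
  simp only [rMatrix, map_mul, map_inv, precompConvUnits_precompConvUnits]
  exact conj_eq_of_cocycle_relations h231 h213 hf

lemma IsCocycle.rMatrix_comp_rTensor_twistedMulConv (hf : IsCocycle f) :
    toConv ((rMatrix f : WithConv (H ⊗[R] H →ₗ[R] R)).ofConv ∘ₗ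
        rTensor H (twistedMulConv f).ofConv ∘ₗ (TensorProduct.assoc R H H H).symm.toLinearMap) =
      ↑(precompConvUnits (proj₁₃ R H) (rMatrix f) * precompConvUnits (proj₂₃ R H) (rMatrix f)) := by
  have h312 := hf.precomp (rotRight R H)
  rw [proj₂₃_comp_rotRight, mul₂₃_comp_rotRight, proj₁₂_comp_rotRight, mul₁₂_comp_rotRight]
    at h312
  have h132 := hf.precomp (swap₂₃ R H)
  rw [proj₂₃_comp_swap₂₃, mul₂₃_comp_swap₂₃, proj₁₂_comp_swap₂₃] at h132
  have hflip := toConv_comp_lTensor_twistedMulConv (f := f)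
    (precompConv (flip R H) (rMatrix f : WithConv (H ⊗[R] H →ₗ[R] R))).ofConv
  rw [rTensor_comp_assoc_symm]
  change precompConv (rotRight R H) (toConv ((precompConv (flip R H)
    (rMatrix f : WithConv (H ⊗[R] H →ₗ[R] R))).ofConv ∘ₗ lTensor H (twistedMulConv f).ofConv)) = _
  rw [hflip, toConv_ofConv, precompConv_val, precompConv_val, ← Units.val_mul, ← Units.val_mul,
    precompConv_val]
  congr 1
  simp only [rMatrix, map_mul, map_inv, precompConvUnits_precompConvUnits, CoalgHom.comp_assoc,
    proj₂₃_comp_rotRight, mul₂₃_comp_rotRight, flip_comp_flip_comp]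
  exact conj_eq_of_cocycle_relations h312.symm h132.symm hf.symm

end CocycleTwist

open Legs CocycleTwist

section Bridge

lemma counit2_eq_ofConv_one : counit2 H = (1 : WithConv (H ⊗[ℂ] H →ₗ[ℂ] ℂ)).ofConv := by
  ext; simp [counit2, mul_comm]

lemma counit3_eq_ofConv_one : counit3 H = (1 : WithConv (H ⊗[ℂ] (H ⊗[ℂ] H) →ₗ[ℂ] ℂ)).ofConv := by
  ext; simp [counit3, counit2]; ring

def convUnit (F Finv : H ⊗[ℂ] H →ₗ[ℂ] ℂ)
    (hF : conv2 H F Finv = counit2 H ∧ conv2 H Finv F = counit2 H) :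
    (WithConv (H ⊗[ℂ] H →ₗ[ℂ] ℂ))ˣ where
  val := toConv F
  inv := toConv Finv
  val_inv := ofConv_injective (hF.1.trans counit2_eq_ofConv_one)
  inv_val := ofConv_injective (hF.2.trans counit2_eq_ofConv_one)

variable {F Finv : H ⊗[ℂ] H →ₗ[ℂ] ℂ}
  (hF : conv2 H F Finv = counit2 H ∧ conv2 H Finv F = counit2 H)

lemma isCocycle_convUnit (hc : IsTwoCocycle F Finv) : IsCocycle (convUnit F Finv hF) := by
  have hT4 : cocyT4 Finv = Finv ∘ₗ proj₁₂ ℂ H := by ext; simp [cocyT4]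
  rw [IsTwoCocycle, hT4, counit3_eq_ofConv_one] at hc
  have key : precompConvUnits (proj₂₃ ℂ H) (convUnit F Finv hF) *
      precompConvUnits (mul₂₃ ℂ H) (convUnit F Finv hF) *
      (precompConvUnits (mul₁₂ ℂ H) (convUnit F Finv hF))⁻¹ *
      (precompConvUnits (proj₁₂ ℂ H) (convUnit F Finv hF))⁻¹ = 1 :=
    Units.ext (ofConv_injective hc)
  rwa [mul_inv_eq_one, mul_inv_eq_iff_eq_mul] at key

lemma twistedMul_eq_twistedMulConv :
    twistedMul F Finv = (twistedMulConv (convUnit F Finv hF)).ofConv := by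
  have hunit : (TensorProduct.rid ℂ H).toLinearMap ∘ₗ
      (TensorProduct.lid ℂ (H ⊗[ℂ] ℂ)).toLinearMap =
        (TensorProduct.lid ℂ H).toLinearMap ∘ₗ
          LinearMap.lTensor ℂ (TensorProduct.rid ℂ H).toLinearMap := by
    ext; simp
  rw [twistedMulConv, mul_assoc, mul_postcompConv_ofId, postcompConv_ofId_mul]
  simp only [twistedMul, ← LinearMap.comp_assoc, hunit]
  simp only [LinearMap.comp_assoc, ← map_comp, LinearMap.comp_id, LinearMap.lTensor_comp_map]
  rfl

lemma Rmat_eq_rMatrix : Rmat F Finv = (rMatrix (convUnit F Finv hF) : WithConv _).ofConv := rfl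

end Bridge

theorem stmt4_general
    (F Finv : (H ⊗[ℂ] H) →ₗ[ℂ] ℂ)
    (hFconv : conv2 H F Finv = counit2 H ∧ conv2 H Finv F = counit2 H)
    (hcocycle : IsTwoCocycle F Finv) :
    -- coquasitriangularity for the twisted product:
    -- `g₍₁₎ •_F h₍₁₎ R(h₍₂₎, g₍₂₎) = R(h₍₁₎, g₍₁₎) h₍₂₎ •_F g₍₂₎`
    ((TensorProduct.rid ℂ H).toLinearMap ∘ₗ
        TensorProduct.map (twistedMul F Finv ∘ₗ (TensorProduct.comm ℂ H H).toLinearMap)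
          (Rmat F Finv) ∘ₗ comul2 H =
      (TensorProduct.lid ℂ H).toLinearMap ∘ₗ
        TensorProduct.map (Rmat F Finv) (twistedMul F Finv) ∘ₗ comul2 H) ∧
    -- bicharacter in the first argument: `R(f •_F g, h) = R(f, h₍₁₎) R(g, h₍₂₎)`
    (Rmat F Finv ∘ₗ TensorProduct.map (twistedMul F Finv) LinearMap.id ∘ₗ
        (TensorProduct.assoc ℂ H H H).symm.toLinearMap =
      conv3 H
        (Rmat F Finv ∘ₗ TensorProduct.map LinearMap.id
          ((TensorProduct.lid ℂ H).toLinearMap ∘ₗ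
            TensorProduct.map Coalgebra.counit LinearMap.id))
        ((LinearMap.mul' ℂ ℂ) ∘ₗ TensorProduct.map Coalgebra.counit (Rmat F Finv))) ∧
    -- bicharacter in the second argument: `R(f, g •_F h) = R(f₍₁₎, h) R(f₍₂₎, g)`
    (Rmat F Finv ∘ₗ TensorProduct.map LinearMap.id (twistedMul F Finv) =
      conv3 H
        (Rmat F Finv ∘ₗ TensorProduct.map LinearMap.id
          ((TensorProduct.lid ℂ H).toLinearMap ∘ₗ
            TensorProduct.map Coalgebra.counit LinearMap.id))
        (Rmat F Finv ∘ₗ TensorProduct.map LinearMap.id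
          ((TensorProduct.rid ℂ H).toLinearMap ∘ₗ
            TensorProduct.map LinearMap.id Coalgebra.counit))) ∧
    -- cotriangularity: `R(h₍₁₎, g₍₁₎) R(g₍₂₎, h₍₂₎) = ε(g) ε(h)` and its flip
    (conv2 H (Rmat F Finv) (Rmat F Finv ∘ₗ (TensorProduct.comm ℂ H H).toLinearMap) =
        counit2 H) ∧
    (conv2 H (Rmat F Finv ∘ₗ (TensorProduct.comm ℂ H H).toLinearMap) (Rmat F Finv) =
        counit2 H) := by
  set f := convUnit F Finv hFconv
  have hf : IsCocycle f := isCocycle_convUnit hFconv hcocycle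
  rw [twistedMul_eq_twistedMulConv hFconv, Rmat_eq_rMatrix hFconv, counit2_eq_ofConv_one]
  refine ⟨?_, ?_, ?_, ?_, ?_⟩
  · have h := congrArg ofConv (precompConv_flip_twistedMulConv_mul_rMatrix (f := f))
    rwa [mul_postcompConv_ofId, postcompConv_ofId_mul] at h
  · rw [mul'_comp_map_counit]
    exact congrArg ofConv hf.rMatrix_comp_rTensor_twistedMulConv
  · exact congrArg ofConv hf.rMatrix_comp_lTensor_twistedMulConv
  · exact congrArg ofConv (congrArg Units.val (rMatrix_mul_precompConvUnits_flip (f := f)))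
  · exact congrArg ofConv (congrArg Units.val (precompConvUnits_flip_mul_rMatrix (f := f)))

/-- Let `H` be a commutative Hopf algebra and `F` a (unital,
convolution-invertible) two-cocycle on `H`.  Then `R(h,g) := F(g₍₁₎,h₍₁₎) F⁻¹(h₍₂₎,g₍₂₎)`
makes the twisted Hopf algebra `H_F` cotriangular:  `R` intertwines the twisted product and
its opposite, it is a Hopf bicharacter with respect to the twisted product, its convolution
inverse is `R ∘ flip`; in particular `R(h₍₁₎,g₍₁₎) R(g₍₂₎,h₍₂₎) = ε(g) ε(h)`. -/
theorem stmt4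
    (F Finv : (H ⊗[ℂ] H) →ₗ[ℂ] ℂ)
    (hFunit : ∀ h : H, F ((1 : H) ⊗ₜ[ℂ] h) = Coalgebra.counit h ∧
                        F (h ⊗ₜ[ℂ] (1 : H)) = Coalgebra.counit h)
    (hFconv : conv2 H F Finv = counit2 H ∧ conv2 H Finv F = counit2 H)
    (hcocycle : IsTwoCocycle F Finv) :
    -- coquasitriangularity for the twisted product:
    -- `g₍₁₎ •_F h₍₁₎ R(h₍₂₎, g₍₂₎) = R(h₍₁₎, g₍₁₎) h₍₂₎ •_F g₍₂₎`
    ((TensorProduct.rid ℂ H).toLinearMap ∘ₗ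
        TensorProduct.map (twistedMul F Finv ∘ₗ (TensorProduct.comm ℂ H H).toLinearMap)
          (Rmat F Finv) ∘ₗ comul2 H =
      (TensorProduct.lid ℂ H).toLinearMap ∘ₗ
        TensorProduct.map (Rmat F Finv) (twistedMul F Finv) ∘ₗ comul2 H) ∧
    -- bicharacter in the first argument: `R(f •_F g, h) = R(f, h₍₁₎) R(g, h₍₂₎)`
    (Rmat F Finv ∘ₗ TensorProduct.map (twistedMul F Finv) LinearMap.id ∘ₗ
        (TensorProduct.assoc ℂ H H H).symm.toLinearMap =
      conv3 H
        (Rmat F Finv ∘ₗ TensorProduct.map LinearMap.id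
          ((TensorProduct.lid ℂ H).toLinearMap ∘ₗ
            TensorProduct.map Coalgebra.counit LinearMap.id))
        ((LinearMap.mul' ℂ ℂ) ∘ₗ TensorProduct.map Coalgebra.counit (Rmat F Finv))) ∧
    -- bicharacter in the second argument: `R(f, g •_F h) = R(f₍₁₎, h) R(f₍₂₎, g)`
    (Rmat F Finv ∘ₗ TensorProduct.map LinearMap.id (twistedMul F Finv) =
      conv3 H
        (Rmat F Finv ∘ₗ TensorProduct.map LinearMap.id
          ((TensorProduct.lid ℂ H).toLinearMap ∘ₗ
            TensorProduct.map Coalgebra.counit LinearMap.id))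
        (Rmat F Finv ∘ₗ TensorProduct.map LinearMap.id
          ((TensorProduct.rid ℂ H).toLinearMap ∘ₗ
            TensorProduct.map LinearMap.id Coalgebra.counit))) ∧
    -- cotriangularity: `R(h₍₁₎, g₍₁₎) R(g₍₂₎, h₍₂₎) = ε(g) ε(h)` and its flip
    (conv2 H (Rmat F Finv) (Rmat F Finv ∘ₗ (TensorProduct.comm ℂ H H).toLinearMap) =
        counit2 H) ∧
    (conv2 H (Rmat F Finv ∘ₗ (TensorProduct.comm ℂ H H).toLinearMap) (Rmat F Finv) =
        counit2 H) :=
  stmt4_general F Finv hFconv hcocycle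
end
end

section
/- In the toric-twisted monad smash product algebra A[M_{k;theta}] # H_F, the elements tilde-M^1 := M^1 tensor varsigma_1, tilde-M^2 := M^2 tensor varsigma_2, tilde-M^3 := M^3 tensor 1, tilde-M^4 := M^4 tensor 1 generate a commutative *-subalgebra; for example tilde-M^j tilde-M^l = eta_{jl} eta_{lj} tilde-M^l tilde-M^j = tilde-M^l tilde-M^j for j in {1,2} and l in {3,4}. -/
noncomputable section

lemma key1 {C : Type*} [Ring C] [Module ℂ C] [SMulCommClass ℂ C C] [IsScalarTower ℂ C C]
    (x y u v : C) (α β γ : ℂ)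
    (hxy : x*y = α • (y*x)) (huy : u*y = β • (y*u)) (hvx : v*x = γ • (x*v))
    (huv : u*v = v*u) (hc : β*α = γ) :
    (x*u)*(y*v) = (y*v)*(x*u) := by
  have L : (x*u)*(y*v) = (β*α) • (y*(x*(v*u))) := by
    calc (x*u)*(y*v) = x*((u*y)*v) := by simp only [mul_assoc]
      _ = β • ((x*y)*(u*v)) := by
          rw [huy, smul_mul_assoc, mul_smul_comm]; simp only [mul_assoc]
      _ = β • ((α • (y*x))*(v*u)) := by rw [hxy, huv]
      _ = (β*α) • (y*(x*(v*u))) := by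
          rw [smul_mul_assoc, smul_smul]; simp only [mul_assoc]
  have R : (y*v)*(x*u) = γ • (y*(x*(v*u))) := by
    calc (y*v)*(x*u) = y*((v*x)*u) := by simp only [mul_assoc]
      _ = γ • (y*(x*(v*u))) := by
          rw [hvx, smul_mul_assoc, mul_smul_comm]; simp only [mul_assoc]
  rw [L, R, hc]

lemma key2 {C : Type*} [Ring C] [Module ℂ C] [SMulCommClass ℂ C C] [IsScalarTower ℂ C C]
    (x y u v : C) (α β γ : ℂ)
    (hxy : x*y = α • (y*x)) (huy : u*y = β • (y*u)) (hxv : x*v = γ • (v*x))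
    (huv : u*v = v*u) (hc : γ*β*α = 1) :
    (x*u)*(v*y) = (v*y)*(x*u) := by
  have L : (x*u)*(v*y) = (γ*(β*α)) • ((v*(y*(x*u)))) := by
    calc (x*u)*(v*y) = (x*v)*(u*y) := by
          rw [mul_assoc, ← mul_assoc u v y, huv]; simp only [mul_assoc]
      _ = (γ*β) • ((v*x)*(y*u)) := by rw [huy, hxv, smul_mul_assoc, mul_smul_comm, smul_smul]
      _ = (γ*β) • (v*((x*y)*u)) := by simp only [mul_assoc]
      _ = (γ*(β*α)) • (v*(y*(x*u))) := by
          rw [hxy, smul_mul_assoc, mul_smul_comm, smul_smul, mul_assoc γ β α]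
          simp only [mul_assoc]
  rw [L, ← mul_assoc γ β α, hc, one_smul]
  simp only [mul_assoc]

/-- The matrix `η_{jl} = F⁻²(ς_j, ς_l)`, with `μ = exp(iπθ)`. -/
def etaMat (θ : ℝ) : Fin 4 → Fin 4 → ℂ :=
  let μ : ℂ := Complex.exp (Real.pi * θ * Complex.I)
  ![![1, 1, μ, μ⁻¹], ![1, 1, μ⁻¹, μ], ![μ⁻¹, μ, 1, 1], ![μ, μ⁻¹, 1, 1]]

/-- In the toric-twisted monad smash product `A[M_{k;θ}] ⋊ H_F`
(modelled as an ambient ℂ-algebra `C` containing the monad generators `M j i` and the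
group-like images `G j` of `(ς_j) = (s₁, s₁^*, s₂, s₂^*)`, with the smash cross relations
`G_l M^j = η_{lj} M^j G_l`), the elements `M̃¹ = M¹ ⊗ ς₁`, `M̃² = M² ⊗ ς₂`, `M̃³ = M³ ⊗ 1`,
`M̃⁴ = M⁴ ⊗ 1` generate a commutative *-subalgebra; for example
`M̃ʲ M̃ˡ = η_{jl} η_{lj} M̃ˡ M̃ʲ = M̃ˡ M̃ʲ` for `j ∈ {1,2}`, `l ∈ {3,4}`. -/
theorem stmt17 (θ : ℝ) (hθ : 0 < θ) (hθ' : θ < 1)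
    (C : Type*) [Ring C] [Algebra ℂ C] [StarRing C] [StarModule ℂ C]
    (ι : Type*)
    (M : Fin 4 → ι → C)           -- the monad generators `M¹, ..., M⁴`
    (G : Fin 4 → C)               -- the images of the group-likes `s₁, s₁^*, s₂, s₂^*`
    -- relations of the toric-twisted monad algebra:
    (hMM : ∀ (j l : Fin 4) (i i'),
      M j i * M l i' = etaMat θ l j • (M l i' * M j i))
    (hMMs : ∀ (j l : Fin 4) (i i'),
      M j i * star (M l i') = etaMat θ j l • (star (M l i') * M j i))
    -- smash-product cross relations for the `H_F`-action `ς_l ⬝ M^j = η_{lj} M^j`: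
    (hGM : ∀ (l j : Fin 4) (i), G l * M j i = etaMat θ l j • (M j i * G l))
    (hGMs : ∀ (l j : Fin 4) (i), G l * star (M j i) = etaMat θ j l • (star (M j i) * G l))
    -- the `G j` commute, are unitary group-likes, and `ς_j^* = ς_j⁻¹`:
    (hGG : ∀ j l, G j * G l = G l * G j)
    (hs1 : star (G 0) = G 1) (hs2 : star (G 1) = G 0)
    (hs3 : star (G 2) = G 3) (hs4 : star (G 3) = G 2)
    (hinv1 : G 0 * G 1 = 1) (hinv2 : G 2 * G 3 = 1)
    -- the elements `M̃ʲ` of the smash product: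
    (Mt : Fin 4 → ι → C)
    (hMt : Mt = fun j i => M j i * ![G 0, G 1, 1, 1] j) :
    -- the `M̃ʲ` and their adjoints pairwise commute (they generate a commutative
    -- *-subalgebra)
    (∀ (j l : Fin 4) (i i'), Mt j i * Mt l i' = Mt l i' * Mt j i) ∧
    (∀ (j l : Fin 4) (i i'), Mt j i * star (Mt l i') = star (Mt l i') * Mt j i) ∧
    -- for example, for `j ∈ {1,2}` and `l ∈ {3,4}`:
    (∀ (j l : Fin 4) (i i'), (j = 0 ∨ j = 1) → (l = 2 ∨ l = 3) →
      Mt j i * Mt l i' = (etaMat θ j l * etaMat θ l j) • (Mt l i' * Mt j i) ∧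
      etaMat θ j l * etaMat θ l j = 1) := by
  have h0 := Complex.exp_ne_zero (Real.pi * θ * Complex.I : ℂ)
  -- the key property of η: η_{jl} η_{lj} = 1
  have hη : ∀ j l : Fin 4, etaMat θ j l * etaMat θ l j = 1 := by
    intro j l
    fin_cases j <;> fin_cases l <;>
      simp [etaMat, mul_inv_cancel₀ h0, inv_mul_cancel₀ h0, Matrix.vecHead, Matrix.vecTail]
  -- relations for the vectors g = ![G 0, G 1, 1, 1] and gs = ![G 1, G 0, 1, 1]
  have hgM : ∀ (j l : Fin 4) (i'),
      (![G 0, G 1, 1, 1] : Fin 4 → C) j * M l i'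
        = (![etaMat θ 0 l, etaMat θ 1 l, 1, 1] : Fin 4 → ℂ) j
            • (M l i' * (![G 0, G 1, 1, 1] : Fin 4 → C) j) := by
    intro j l i'
    fin_cases j
    · simpa using hGM 0 l i'
    · simpa using hGM 1 l i'
    · simp
    · simp
  have hgMs : ∀ (j l : Fin 4) (i'),
      (![G 0, G 1, 1, 1] : Fin 4 → C) j * star (M l i')
        = (![etaMat θ l 0, etaMat θ l 1, 1, 1] : Fin 4 → ℂ) j
            • (star (M l i') * (![G 0, G 1, 1, 1] : Fin 4 → C) j) := by
    intro j l i'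
    fin_cases j
    · simpa using hGMs 0 l i'
    · simpa using hGMs 1 l i'
    · simp
    · simp
  have hMG : ∀ (j a : Fin 4) (i), M j i * G a = etaMat θ j a • (G a * M j i) := by
    intro j a i
    rw [hGM a j i, smul_smul, hη j a, one_smul]
  have hMgs : ∀ (j l : Fin 4) (i),
      M j i * (![G 1, G 0, 1, 1] : Fin 4 → C) l
        = (![etaMat θ j 1, etaMat θ j 0, 1, 1] : Fin 4 → ℂ) l
            • ((![G 1, G 0, 1, 1] : Fin 4 → C) l * M j i) := by
    intro j l i
    fin_cases l
    · simpa using hMG j 1 i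
    · simpa using hMG j 0 i
    · simp
    · simp
  have hgg : ∀ j l : Fin 4,
      (![G 0, G 1, 1, 1] : Fin 4 → C) j * (![G 0, G 1, 1, 1] : Fin 4 → C) l
        = (![G 0, G 1, 1, 1] : Fin 4 → C) l * (![G 0, G 1, 1, 1] : Fin 4 → C) j := by
    intro j l
    fin_cases j <;> fin_cases l <;> simp <;>
      first
        | exact hGG 0 1 | exact hGG 1 0
  have hggs : ∀ j l : Fin 4,
      (![G 0, G 1, 1, 1] : Fin 4 → C) j * (![G 1, G 0, 1, 1] : Fin 4 → C) l
        = (![G 1, G 0, 1, 1] : Fin 4 → C) l * (![G 0, G 1, 1, 1] : Fin 4 → C) j := by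
    intro j l
    fin_cases j <;> fin_cases l <;> simp <;>
      first
        | exact hGG 0 1 | exact hGG 1 0
  have hstarg : ∀ l : Fin 4,
      star ((![G 0, G 1, 1, 1] : Fin 4 → C) l) = (![G 1, G 0, 1, 1] : Fin 4 → C) l := by
    intro l
    fin_cases l <;> simp [hs1, hs2]
  -- scalar identities
  have hc1 : ∀ j l : Fin 4,
      (![etaMat θ 0 l, etaMat θ 1 l, 1, 1] : Fin 4 → ℂ) j * etaMat θ l j
        = (![etaMat θ 0 j, etaMat θ 1 j, 1, 1] : Fin 4 → ℂ) l := by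
    intro j l
    fin_cases j <;> fin_cases l <;>
      simp [etaMat, mul_inv_cancel₀ h0, inv_mul_cancel₀ h0, Matrix.vecHead, Matrix.vecTail]
  have hc2 : ∀ j l : Fin 4,
      (![etaMat θ j 1, etaMat θ j 0, 1, 1] : Fin 4 → ℂ) l
        * (![etaMat θ l 0, etaMat θ l 1, 1, 1] : Fin 4 → ℂ) j * etaMat θ j l = 1 := by
    intro j l
    fin_cases j <;> fin_cases l <;>
      simp [etaMat, mul_inv_cancel₀ h0, inv_mul_cancel₀ h0, Matrix.vecHead, Matrix.vecTail]
  have H1 : ∀ (j l : Fin 4) (i i'), Mt j i * Mt l i' = Mt l i' * Mt j i := by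
    intro j l i i'
    simp only [hMt]
    exact key1 (M j i) (M l i') ((![G 0, G 1, 1, 1] : Fin 4 → C) j)
      ((![G 0, G 1, 1, 1] : Fin 4 → C) l) (etaMat θ l j) _ _
      (hMM j l i i') (hgM j l i') (hgM l j i) (hgg j l) (hc1 j l)
  refine ⟨H1, ?_, ?_⟩
  · intro j l i i'
    simp only [hMt, star_mul, hstarg]
    exact key2 (M j i) (star (M l i')) ((![G 0, G 1, 1, 1] : Fin 4 → C) j)
      ((![G 1, G 0, 1, 1] : Fin 4 → C) l) (etaMat θ j l) _ _
      (hMMs j l i i') (hgMs j l i') (hMgs j l i) (hggs j l) (hc2 j l)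
  · intro j l i i' _ _
    exact ⟨by rw [hη j l, one_smul]; exact H1 j l i i', hη j l⟩
end
end

section
/- Suppose (2k+2) x k complex matrices M-tilde^1, ..., M-tilde^4 and k x (2k+2) complex matrices N-tilde^1, ..., N-tilde^4 satisfy the normalized form M-tilde^3 = (1_k; 0_k; 0_{2xk}), M-tilde^4 = (0_k; 1_k; 0_{2xk}), N-tilde^3 = (0_k, 1_k, 0_{kx2}), N-tilde^4 = (-1_k, 0_k, 0_{kx2}), with M-tilde^1 = (B_1; B_2; J), M-tilde^2 = (-mu-bar B_2^*; mu B_1^*; I^*), N-tilde^1 = (-mu B_2, mu-bar B_1, I), and N-tilde^2 as dictated by self-conjugacy. Then the toric monad conditions N-tilde^j M-tilde^l + eta_{jl} N-tilde^l M-tilde^j = 0 for all j,l are equivalent to the two equations: (i) mu-bar B_1 B_2 - mu B_2 B_1 + I J = 0 and (ii) [B_1, B_1^*] + [B_2, B_2^*] + I I^* - J^* J = 0. -/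
noncomputable section

/-- Vertical stacking of a `k × k`, a `k × k` and a `2 × k` block into a `(2k+2) × k`
matrix. -/
def stack3 {k : ℕ} (X Y : Matrix (Fin k) (Fin k) ℂ) (Z : Matrix (Fin 2) (Fin k) ℂ) :
    Matrix (Fin k ⊕ (Fin k ⊕ Fin 2)) (Fin k) ℂ :=
  Matrix.of fun r c => Sum.elim (fun a => X a c) (Sum.elim (fun a => Y a c) fun a => Z a c) r

/-- Horizontal concatenation of a `k × k`, a `k × k` and a `k × 2` block into a
`k × (2k+2)` matrix. -/
def cat3 {k : ℕ} (X Y : Matrix (Fin k) (Fin k) ℂ) (Z : Matrix (Fin k) (Fin 2) ℂ) :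
    Matrix (Fin k) (Fin k ⊕ (Fin k ⊕ Fin 2)) ℂ :=
  Matrix.of fun r c => Sum.elim (fun a => X r a) (Sum.elim (fun a => Y r a) fun a => Z r a) c

lemma cat3_mul_stack3 {k : ℕ} (X Y : Matrix (Fin k) (Fin k) ℂ) (Z : Matrix (Fin k) (Fin 2) ℂ)
    (X' Y' : Matrix (Fin k) (Fin k) ℂ) (Z' : Matrix (Fin 2) (Fin k) ℂ) :
    cat3 X Y Z * stack3 X' Y' Z' = X * X' + Y * Y' + Z * Z' := by
  ext i j
  simp [Matrix.mul_apply, cat3, stack3, Fintype.sum_sum_type, add_assoc]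

/-- Suppose the `(2k+2) × k` matrices `M̃¹, ..., M̃⁴` and the
`k × (2k+2)` matrices `Ñ¹, ..., Ñ⁴` are in the normalized self-conjugate form of the toric
ADHM construction:  `M̃³ = (1;0;0)`, `M̃⁴ = (0;1;0)`, `Ñ³ = (0,1,0)`, `Ñ⁴ = (-1,0,0)`,
`M̃¹ = (B₁;B₂;J)`, `M̃² = (-μ̄B₂^*; μB₁^*; I^*)`, `Ñ¹ = (-μB₂, μ̄B₁, I)`,
`Ñ² = (-μ̄B₂', μB₁', I')` with `B₁' = -μ̄B₂^*`, `B₂' = μB₁^*`, `I' = -J^*` (self-conjugacy).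
Then the toric monad conditions `Ñʲ M̃ˡ + η_{jl} Ñˡ M̃ʲ = 0` for all `j, l` are equivalent
to the two ADHM equations (i) `μ̄ B₁B₂ - μ B₂B₁ + IJ = 0` and
(ii) `[B₁,B₁^*] + [B₂,B₂^*] + II^* - J^*J = 0`. -/
theorem stmt19 (θ : ℝ) (hθ : 0 < θ) (hθ' : θ < 1) (k : ℕ) (hk : 0 < k)
    (B₁ B₂ : Matrix (Fin k) (Fin k) ℂ)
    (I : Matrix (Fin k) (Fin 2) ℂ) (J : Matrix (Fin 2) (Fin k) ℂ)
    (μ : ℂ) (hμ : μ = Complex.exp (Real.pi * θ * Complex.I))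
    (Mt : Fin 4 → Matrix (Fin k ⊕ (Fin k ⊕ Fin 2)) (Fin k) ℂ)
    (Nt : Fin 4 → Matrix (Fin k) (Fin k ⊕ (Fin k ⊕ Fin 2)) ℂ)
    (hM1 : Mt 0 = stack3 B₁ B₂ J)
    (hM2 : Mt 1 = stack3 (-((starRingEnd ℂ μ) • B₂.conjTranspose))
      (μ • B₁.conjTranspose) I.conjTranspose)
    (hM3 : Mt 2 = stack3 1 0 0)
    (hM4 : Mt 3 = stack3 0 1 0)
    (hN1 : Nt 0 = cat3 (-(μ • B₂)) ((starRingEnd ℂ μ) • B₁) I)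
    (hN2 : Nt 1 = cat3 (-((starRingEnd ℂ μ) • (μ • B₁.conjTranspose)))
      (μ • (-((starRingEnd ℂ μ) • B₂.conjTranspose))) (-J.conjTranspose))
    (hN3 : Nt 2 = cat3 0 1 0)
    (hN4 : Nt 3 = cat3 (-1) 0 0) :
    (∀ j l : Fin 4, Nt j * Mt l + etaMat θ j l • (Nt l * Mt j) = 0) ↔
      ((starRingEnd ℂ μ) • (B₁ * B₂) - μ • (B₂ * B₁) + I * J = 0 ∧
        (B₁ * B₁.conjTranspose - B₁.conjTranspose * B₁) +
          (B₂ * B₂.conjTranspose - B₂.conjTranspose * B₂) +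
          I * I.conjTranspose - J.conjTranspose * J = 0) := by
  have hμ0 : μ ≠ 0 := by rw [hμ]; exact Complex.exp_ne_zero _
  have hinv : (starRingEnd ℂ μ) = μ⁻¹ := by
    rw [hμ, ← Complex.exp_conj, ← Complex.exp_neg]
    congr 1
    simp [Complex.conj_I]
  have hinv' : (starRingEnd ℂ) μ⁻¹ = μ := by rw [map_inv₀, hinv, inv_inv]
  rw [hinv] at hM2 hN1 hN2 ⊢
  have hN2' : Nt 1 = cat3 (-(B₁.conjTranspose)) (-(B₂.conjTranspose)) (-J.conjTranspose) := by
    rw [hN2, smul_smul, inv_mul_cancel₀ hμ0, one_smul, smul_neg, smul_smul,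
      mul_inv_cancel₀ hμ0, one_smul]
  set A₁ := B₁.conjTranspose with hA₁
  set A₂ := B₂.conjTranspose with hA₂
  set Ict := I.conjTranspose with hIc
  set Jc := J.conjTranspose with hJc
  -- products
  have P00 : Nt 0 * Mt 0 = μ⁻¹ • (B₁ * B₂) - μ • (B₂ * B₁) + I * J := by
    rw [hN1, hM1, cat3_mul_stack3, Matrix.neg_mul, Matrix.smul_mul, Matrix.smul_mul]
    abel
  have P01 : Nt 0 * Mt 1 = B₁ * A₁ + B₂ * A₂ + I * Ict := by
    rw [hN1, hM2, cat3_mul_stack3, Matrix.neg_mul, Matrix.mul_neg, Matrix.smul_mul,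
      Matrix.mul_smul, Matrix.smul_mul, Matrix.mul_smul, neg_neg, smul_smul, smul_smul,
      mul_inv_cancel₀ hμ0, inv_mul_cancel₀ hμ0, one_smul, one_smul]
    abel
  have P02 : Nt 0 * Mt 2 = -(μ • B₂) := by
    rw [hN1, hM3, cat3_mul_stack3]
    simp
  have P03 : Nt 0 * Mt 3 = μ⁻¹ • B₁ := by
    rw [hN1, hM4, cat3_mul_stack3]
    simp
  have P10 : Nt 1 * Mt 0 = -(A₁ * B₁ + A₂ * B₂ + Jc * J) := by
    rw [hN2', hM1, cat3_mul_stack3]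
    simp only [Matrix.neg_mul]
    abel
  have P11 : Nt 1 * Mt 1 = -(μ • (A₂ * A₁) - μ⁻¹ • (A₁ * A₂) + Jc * Ict) := by
    rw [hN2', hM2, cat3_mul_stack3, Matrix.neg_mul, Matrix.neg_mul, Matrix.neg_mul,
      Matrix.mul_neg, Matrix.mul_smul, Matrix.mul_smul, neg_neg]
    abel
  have P12 : Nt 1 * Mt 2 = -A₁ := by
    rw [hN2', hM3, cat3_mul_stack3]
    simp
  have P13 : Nt 1 * Mt 3 = -A₂ := by
    rw [hN2', hM4, cat3_mul_stack3]
    simp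
  have P20 : Nt 2 * Mt 0 = B₂ := by
    rw [hN3, hM1, cat3_mul_stack3]
    simp
  have P21 : Nt 2 * Mt 1 = μ • A₁ := by
    rw [hN3, hM2, cat3_mul_stack3]
    simp
  have P22 : Nt 2 * Mt 2 = 0 := by
    rw [hN3, hM3, cat3_mul_stack3]
    simp
  have P23 : Nt 2 * Mt 3 = 1 := by
    rw [hN3, hM4, cat3_mul_stack3]
    simp
  have P30 : Nt 3 * Mt 0 = -B₁ := by
    rw [hN4, hM1, cat3_mul_stack3]
    simp
  have P31 : Nt 3 * Mt 1 = μ⁻¹ • A₂ := by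
    rw [hN4, hM2, cat3_mul_stack3]
    simp
  have P32 : Nt 3 * Mt 2 = -1 := by
    rw [hN4, hM3, cat3_mul_stack3]
    simp
  have P33 : Nt 3 * Mt 3 = 0 := by
    rw [hN4, hM4, cat3_mul_stack3]
    simp
  constructor
  · intro H
    constructor
    · have h00 := H 0 0
      rw [P00, show etaMat θ 0 0 = 1 by simp [etaMat, Matrix.vecHead, Matrix.vecTail, ← hμ], one_smul, ← two_smul ℂ] at h00
      exact (smul_eq_zero.mp h00).resolve_left two_ne_zero
    · have h01 := H 0 1
      rw [P01, P10, show etaMat θ 0 1 = 1 by simp [etaMat, Matrix.vecHead, Matrix.vecTail, ← hμ], one_smul] at h01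
      rw [show B₁ * A₁ - A₁ * B₁ + (B₂ * A₂ - A₂ * B₂) + I * Ict - Jc * J
        = B₁ * A₁ + B₂ * A₂ + I * Ict + -(A₁ * B₁ + A₂ * B₂ + Jc * J) from by abel]
      exact h01
  · rintro ⟨h1, h2⟩
    have h1t : μ • (A₂ * A₁) - μ⁻¹ • (A₁ * A₂) + Jc * Ict = 0 := by
      have := congrArg Matrix.conjTranspose h1
      simpa [Matrix.conjTranspose_smul, Matrix.conjTranspose_mul, hinv, hinv', ← hA₁, ← hA₂,
        ← hIc, ← hJc, sub_eq_add_neg] using this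
    intro j l
    fin_cases j <;> fin_cases l <;>
      simp only [Fin.zero_eta, Fin.mk_one, Fin.reduceFinMk]
    · rw [P00, show etaMat θ 0 0 = 1 by simp [etaMat, Matrix.vecHead, Matrix.vecTail, ← hμ], one_smul, h1, add_zero]
    · rw [P01, P10, show etaMat θ 0 1 = 1 by simp [etaMat, Matrix.vecHead, Matrix.vecTail, ← hμ], one_smul, ← h2]
      abel
    · rw [P02, P20, show etaMat θ 0 2 = μ by simp [etaMat, Matrix.vecHead, Matrix.vecTail, ← hμ]]
      simp
    · rw [P03, P30, show etaMat θ 0 3 = μ⁻¹ by simp [etaMat, Matrix.vecHead, Matrix.vecTail, ← hμ]]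
      simp
    · rw [P10, P01, show etaMat θ 1 0 = 1 by simp [etaMat, Matrix.vecHead, Matrix.vecTail, ← hμ], one_smul, ← h2]
      abel
    · rw [P11, show etaMat θ 1 1 = 1 by simp [etaMat, Matrix.vecHead, Matrix.vecTail, ← hμ], one_smul, h1t]
      simp
    · rw [P12, P21, show etaMat θ 1 2 = μ⁻¹ by simp [etaMat, Matrix.vecHead, Matrix.vecTail, ← hμ], smul_smul,
        inv_mul_cancel₀ hμ0, one_smul]
      simp
    · rw [P13, P31, show etaMat θ 1 3 = μ by simp [etaMat, Matrix.vecHead, Matrix.vecTail, ← hμ], smul_smul,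
        mul_inv_cancel₀ hμ0, one_smul]
      simp
    · rw [P20, P02, show etaMat θ 2 0 = μ⁻¹ by simp [etaMat, Matrix.vecHead, Matrix.vecTail, ← hμ], smul_neg, smul_smul,
        inv_mul_cancel₀ hμ0, one_smul]
      simp
    · rw [P21, P12, show etaMat θ 2 1 = μ by simp [etaMat, Matrix.vecHead, Matrix.vecTail, ← hμ], smul_neg]
      simp
    · rw [P22, show etaMat θ 2 2 = 1 by simp [etaMat, Matrix.vecHead, Matrix.vecTail, ← hμ]]
      simp
    · rw [P23, P32, show etaMat θ 2 3 = 1 by simp [etaMat, Matrix.vecHead, Matrix.vecTail, ← hμ]]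
      simp
    · rw [P30, P03, show etaMat θ 3 0 = μ by simp [etaMat, Matrix.vecHead, Matrix.vecTail, ← hμ], smul_smul,
        mul_inv_cancel₀ hμ0, one_smul]
      simp
    · rw [P31, P13, show etaMat θ 3 1 = μ⁻¹ by simp [etaMat, Matrix.vecHead, Matrix.vecTail, ← hμ], smul_neg]
      simp
    · rw [P32, P23, show etaMat θ 3 2 = 1 by simp [etaMat, Matrix.vecHead, Matrix.vecTail, ← hμ]]
      simp
    · rw [P33, show etaMat θ 3 3 = 1 by simp [etaMat, Matrix.vecHead, Matrix.vecTail, ← hμ]]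
      simp
end
end
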